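/- arXiv:1608.05927 — 7 statements merged into one kernel-verified Lean document; each statement's English description precedes it below -/
import Mathlib

section
/- A finite group H is solvable if and only if for every finite perfect group G, the map G → 0 has the left lifting property with respect to H → 0. -/
/-!
Lifting against `H → 0` says exactly that every homomorphism out of the source into `H` is
trivial. A perfect group has perfect image, and a solvable group has no nontrivial perfect
subgroup; conversely, by well-foundedness of the subgroup lattice, a finite group all of whose
perfect subgroups are trivial is solvable.
-/

/-- Quillen lifting property: `f ⧄ g`. -/
def Lifts {A B X Y : Type*} [Group A] [Group B] [Group X] [Group Y]
    (f : A →* B) (g : X →* Y) : Prop :=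
  ∀ (i : A →* X) (j : B →* Y), g.comp i = j.comp f →
    ∃ h : B →* X, h.comp f = i ∧ g.comp h = j

lemma lifts_one_one_iff {A B X Y : Type*} [Group A] [Group B] [Group X] [Group Y]
    [Subsingleton Y] : Lifts (1 : A →* B) (1 : X →* Y) ↔ ∀ i : A →* X, i = 1 := by
  refine ⟨fun h i ↦ ?_, fun h i j _ ↦
    ⟨1, (h i).symm, MonoidHom.ext fun _ ↦ Subsingleton.elim _ _⟩⟩
  obtain ⟨k, hk, -⟩ := h i 1 (MonoidHom.ext fun _ ↦ Subsingleton.elim _ _)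
  rw [← hk, MonoidHom.comp_one]

lemma MonoidHom.eq_one_of_commutator_eq_top {G H : Type*} [Group G] [Group H]
    [Group.IsSolvable H] (hG : commutator G = ⊤) (f : G →* H) : f = 1 := by
  rw [← MonoidHom.range_eq_bot_iff]
  by_contra hf
  refine (Group.IsSolvable.commutator_lt_of_ne_bot hf).ne ?_
  rw [MonoidHom.range_eq_map, ← Subgroup.map_commutator, ← commutator_def, hG]

lemma Group.isSolvable_of_forall_commutator_eq_top {H : Type*} [Group H] [Finite H]
    (h : ∀ K : Subgroup H, commutator K = ⊤ → K = ⊥) : Group.IsSolvable H := by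
  refine isSolvable_iff_commutator_lt.2 fun K hK ↦
    K.commutator_le_self.lt_of_ne fun hKK ↦ hK (h K ?_)
  rwa [← Subgroup.map_subtype_inj, K.map_subtype_commutator, ← MonoidHom.range_eq_map,
    K.range_subtype]

theorem stmt6 {H : Type u} [Group H] [Finite H] :
    IsSolvable H ↔
      ∀ (G : Type u) [Group G] [Finite G], commutator G = ⊤ →
        Lifts (1 : G →* PUnit) (1 : H →* PUnit) := by
  simp only [lifts_one_one_iff]
  refine ⟨fun hH G _ _ hG ↦ ?_, fun h ↦ ?_⟩
  · have : Group.IsSolvable H := hH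
    exact MonoidHom.eq_one_of_commutator_eq_top hG
  · refine Group.isSolvable_of_forall_commutator_eq_top fun K hK ↦ ?_
    rw [← K.range_subtype, MonoidHom.range_eq_bot_iff]
    exact h K hK K.subtype
end

section
/- For a homomorphism f : N →* H, the following are equivalent: (1) the normal closure of the image of f is all of H; (2) for every group G, f has the left lifting property with respect to the map 0 → G from the trivial group. -/
theorem stmt12 {N H : Type u} [Group N] [Group H] (f : N →* H) :
    Subgroup.normalClosure (f.range : Set H) = ⊤ ↔
      ∀ (G : Type u) [Group G], Lifts f (1 : PUnit →* G) := by
  constructor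
  · intro htop G _ i j hcomm
    refine ⟨1, by ext x, ?_⟩
    have hj : j = 1 := by
      have hker : Subgroup.normalClosure (f.range : Set H) ≤ j.ker := by
        apply Subgroup.normalClosure_le_normal
        rintro x ⟨n, rfl⟩
        have := congrFun (congrArg DFunLike.coe hcomm) n
        simpa using this.symm
      rw [htop] at hker
      ext x
      simpa using hker (Subgroup.mem_top x)
    subst hj
    ext x
    simp
  · intro hlift
    set K := Subgroup.normalClosure (f.range : Set H)
    have hK : K.Normal := Subgroup.normalClosure_normal
    obtain ⟨h, -, hgh⟩ := hlift (H ⧸ K) 1 (QuotientGroup.mk' K) (by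
      ext n
      simp only [MonoidHom.comp_apply, MonoidHom.one_apply, QuotientGroup.mk'_apply]
      symm
      rw [QuotientGroup.eq_one_iff]
      exact Subgroup.subset_normalClosure ⟨n, rfl⟩)
    have : ∀ x : H, QuotientGroup.mk' K x = 1 := by
      intro x
      have h3 := congrFun (congrArg DFunLike.coe hgh) x
      simp only [MonoidHom.comp_apply, MonoidHom.one_apply] at h3
      exact h3.symm
    ext x
    simp only [Subgroup.mem_top, iff_true]
    have h2 := this x
    rw [QuotientGroup.mk'_apply] at h2
    exact (QuotientGroup.eq_one_iff x).mp h2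
end

section
/- If D is a normal subgroup of a group G, then the inclusion D → G has the right lifting property with respect to every homomorphism f : N →* H whose image has normal closure equal to all of H. -/
theorem stmt13 {G : Type*} [Group G] (D : Subgroup G) [D.Normal]
    {N H : Type*} [Group N] [Group H] (f : N →* H)
    (hf : Subgroup.normalClosure (f.range : Set H) = ⊤) :
    Lifts f D.subtype := by
  intro i j hij
  have hmem : ∀ x : H, j x ∈ D := by
    intro x
    have hsub : Subgroup.normalClosure (f.range : Set H) ≤ D.comap j := by
      apply Subgroup.normalClosure_le_normal
      rintro _ ⟨n, rfl⟩
      have := congrArg (fun k => k n) hij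
      simp only [MonoidHom.comp_apply] at this
      show j (f n) ∈ D
      rw [← this]
      exact (i n).2
    have := hsub (by rw [hf]; trivial : x ∈ Subgroup.normalClosure (f.range : Set H))
    exact this
  refine ⟨j.codRestrict D hmem, ?_, ?_⟩
  · ext n
    have := congrArg (fun k => k n) hij
    simp only [MonoidHom.comp_apply, Subgroup.coe_subtype] at this
    simpa using this.symm
  · ext x
    rfl
end

section
/- Let G be a finite group and D ≤ G a subgroup. Then D is a subnormal subgroup of G if and only if the inclusion homomorphism D → G has the right lifting property with respect to every homomorphism f : N →* H whose image has normal closure equal to all of H. -/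
/-- `D` is a subnormal subgroup of `G`. -/
def IsSubnormalSubgroup {G : Type*} [Group G] (D : Subgroup G) : Prop :=
  ∃ (n : ℕ) (c : ℕ → Subgroup G), c 0 = D ∧ c n = ⊤ ∧
    ∀ i < n, c i ≤ c (i + 1) ∧ ((c i).subgroupOf (c (i + 1))).Normal
theorem stmt15 {G : Type u} [Group G] [Finite G] (D : Subgroup G) :
    IsSubnormalSubgroup D ↔
      ∀ (N H : Type u) [Group N] [Group H] (f : N →* H),
        Subgroup.normalClosure (f.range : Set H) = ⊤ → Lifts f D.subtype := by
  constructor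
  · rintro ⟨n, c, hc0, hcn, hstep⟩ N H _ _ f hf i j hsq
    -- monotonicity of chain up to n
    have hmono : ∀ m, m ≤ n → c 0 ≤ c m := by
      intro m
      induction m with
      | zero => intro _; exact le_rfl
      | succ m ih =>
        intro hm
        exact (ih (Nat.le_of_succ_le hm)).trans (hstep m (Nat.lt_of_succ_le hm)).1
    have key : ∀ m, m ≤ n → ∀ h : H, j h ∈ c (n - m) := by
      intro m
      induction m with
      | zero => intro _ h; simp [hcn]
      | succ m ih =>
        intro hm h
        have ihm := ih (Nat.le_of_succ_le hm)
        have hnm : n - m = (n - (m + 1)) + 1 := by omega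
        rw [hnm] at ihm
        set i0 := n - (m + 1) with hi0def
        have hi0 : i0 < n := by omega
        obtain ⟨hle, hnorm⟩ := hstep i0 hi0
        let j' : H →* c (i0 + 1) := j.codRestrict _ ihm
        have hcomap : (((c i0).subgroupOf (c (i0 + 1))).comap j').Normal :=
          hnorm.comap j'
        have hsub : (f.range : Set H) ⊆ (((c i0).subgroupOf (c (i0 + 1))).comap j') := by
          rintro x ⟨nn, rfl⟩
          have hx : j (f nn) ∈ D := by
            have := congrArg (fun φ => φ nn) hsq.symm
            simp only [MonoidHom.comp_apply] at this
            rw [this]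
            exact (i nn).2
          have : j (f nn) ∈ c i0 := hmono i0 hi0.le (hc0 ▸ hx)
          exact this
        have hle2 := Subgroup.normalClosure_le_normal (N := ((c i0).subgroupOf (c (i0 + 1))).comap j') hsub
        rw [hf] at hle2
        exact hle2 (Subgroup.mem_top h)
    have hD : ∀ h : H, j h ∈ D := by
      intro h
      have := key n le_rfl h
      simpa [Nat.sub_self, hc0] using this
    refine ⟨j.codRestrict D hD, ?_, ?_⟩
    · ext nn
      have := congrArg (fun φ => φ nn) hsq.symm
      simp only [MonoidHom.comp_apply] at this
      simpa using this
    · rfl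
  · intro hlift
    classical
    let nc : Subgroup G → Subgroup G := fun E =>
      (Subgroup.normalClosure ((D.subgroupOf E : Subgroup E) : Set E)).map E.subtype
    have nc_le : ∀ E, nc E ≤ E := by
      rintro E x ⟨y, hy, rfl⟩; exact y.2
    have le_nc : ∀ E, D ≤ E → D ≤ nc E := by
      intro E hDE x hx
      exact ⟨⟨x, hDE hx⟩, Subgroup.le_normalClosure hx, rfl⟩
    let c' : ℕ → Subgroup G := fun k => Nat.rec (motive := fun _ => Subgroup G) ⊤ (fun _ E => nc E) k
    have hc'succ : ∀ k, c' (k + 1) = nc (c' k) := fun k => rfl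
    have hD' : ∀ k, D ≤ c' k := by
      intro k
      induction k with
      | zero => exact le_top
      | succ k ih => exact le_nc _ ih
    have hanti : Antitone c' := antitone_nat_of_succ_le fun k => nc_le (c' k)
    have : ∃ k, c' (k + 1) = c' k := by
      obtain ⟨a, b, hab, heq⟩ := Finite.exists_ne_map_eq_of_infinite c'
      rcases Nat.lt_or_ge a b with h | h
      · exact ⟨a, le_antisymm (nc_le _) (heq ▸ hanti h)⟩
      · have h' : b < a := lt_of_le_of_ne h (Ne.symm hab)
        exact ⟨b, le_antisymm (nc_le _) (heq.symm ▸ hanti h')⟩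
    obtain ⟨k, hk⟩ := this
    set K := c' k with hKdef
    have hDK : D ≤ K := hD' k
    have hmap : nc K = K := by rw [← hc'succ]; exact hk
    have hncl : Subgroup.normalClosure (↑(D.subgroupOf K) : Set ↥K) = ⊤ := by
      refine Subgroup.map_injective (f := K.subtype) K.subtype_injective ?_
      have h2 : Subgroup.map K.subtype ⊤ = K := by
        rw [← MonoidHom.range_eq_map]
        exact K.range_subtype
      rw [h2]
      exact hmap
    have hrange : Subgroup.normalClosure (↑(Subgroup.inclusion hDK).range : Set ↥K) = ⊤ := by
      rw [Subgroup.inclusion_range]; exact hncl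
    obtain ⟨h, h1, h2⟩ := hlift ↥D ↥K (Subgroup.inclusion hDK) hrange
      (MonoidHom.id ↥D) K.subtype (by ext x; rfl)
    have hKD : K = D := by
      apply le_antisymm _ hDK
      intro x hx
      have := congrArg (fun φ => φ (⟨x, hx⟩ : K)) h2
      simp only [MonoidHom.comp_apply, Subgroup.coe_subtype] at this
      rw [← this]
      exact (h ⟨x, hx⟩).2
    refine ⟨k, fun i => c' (k - i), by simp [← hKdef, hKD], by show c' (k - k) = ⊤; rw [Nat.sub_self]; rfl, ?_⟩
    intro i hi
    have hki : k - i = (k - (i + 1)) + 1 := by omega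
    dsimp only
    rw [hki]
    constructor
    · exact hanti (Nat.le_succ _)
    · rw [hc'succ]
      have : (nc (c' (k - (i + 1)))).subgroupOf (c' (k - (i + 1))) =
          Subgroup.normalClosure ((D.subgroupOf (c' (k - (i + 1))) : Subgroup _) : Set _) := by
        exact Subgroup.comap_map_eq_self_of_injective (Subgroup.subtype_injective _) _
      rw [this]
      infer_instance
end

section
/- A finite group G is nilpotent if and only if the diagonal subgroup {(g,g) : g ∈ G} is a subnormal subgroup of G × G. -/
/-!
If `G` is finite and nilpotent, so is `G × G`; it satisfies the normalizer condition, and iterating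
normalizers from any subgroup reaches the whole group, so every subgroup is subnormal.

Conversely, let `Δ = H₀ ⊴ H₁ ⊴ ⋯ ⊴ Hₙ = G × G`. If `γ × 1 ≤ Hᵢ₊₁` for a term `γ` of the lower
central series, then for `x ∈ γ` and `y ∈ G` we have
`⁅(x, 1), (y, 1)⁆ = ⁅(x, 1), (y, y)⁆ ∈ Hᵢ`, as `(y, y) ∈ Δ ≤ Hᵢ ⊴ Hᵢ₊₁`. Descending the chain,
`γₙ × 1 ≤ Δ`, i.e. `γₙ = 1`.
-/

open Subgroup
open scoped commutatorElement

section

variable {G : Type*} [Group G]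

theorem isSubnormalSubgroup_iff_isSubnormal {D : Subgroup G} :
    IsSubnormalSubgroup D ↔ D.IsSubnormal := by
  constructor
  · rintro ⟨n, c, rfl, hcn, hc⟩
    exact Nat.decreasingInduction (motive := fun i _ => (c i).IsSubnormal)
      (fun i hi ih => .step _ _ (hc i hi).1 ih (hc i hi).2) (hcn ▸ .top) n.zero_le
  · intro hD
    obtain ⟨n, c, hmono, hnormal, hc0, hcn⟩ := IsSubnormal.isSubnormal_iff.mp hD
    exact ⟨n, c, hc0, hcn, fun i _ => ⟨hmono i.le_succ, hnormal i⟩⟩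

theorem Subgroup.isSubnormal_of_normalizerCondition [WellFoundedGT (Subgroup G)]
    (hG : NormalizerCondition G) (H : Subgroup G) : H.IsSubnormal := by
  induction H using WellFoundedGT.induction with
  | _ H ih =>
    obtain rfl | hH := eq_or_ne H ⊤
    · exact .top
    · exact .step H (normalizer H) le_normalizer (ih _ (hG H hH.lt_top)) normal_in_normalizer

variable (G) in
abbrev diagonalSubgroup : Subgroup (G × G) :=
  ((MonoidHom.id G).prod (MonoidHom.id G)).range

theorem comap_inl_diagonalSubgroup : (diagonalSubgroup G).comap (MonoidHom.inl G G) = ⊥ := by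
  refine eq_bot_iff.mpr fun g ⟨y, hy⟩ => ?_
  simp only [MonoidHom.prod_apply, MonoidHom.id_apply, MonoidHom.inl_apply, Prod.ext_iff] at hy
  exact hy.1 ▸ hy.2

theorem map_inl_commutator_top_le {H : Subgroup (G × G)} {N : Subgroup G}
    (hdiag : diagonalSubgroup G ≤ H) (hN : N.map (MonoidHom.inl G G) ≤ normalizer H) :
    (⁅N, ⊤⁆ : Subgroup G).map (MonoidHom.inl G G) ≤ H := by
  rw [map_commutator, commutator_le]
  rintro _ ⟨x, hx, rfl⟩ _ ⟨y, -, rfl⟩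
  have hcomm : ⁅MonoidHom.inl G G x, MonoidHom.inl G G y⁆ = ⁅MonoidHom.inl G G x, (y, y)⁆ := by
    ext <;> simp [commutatorElement_def]
  rw [hcomm]
  exact le_normalizer_iff_commutator_le_right.mp le_rfl
    (commutator_mem_commutator (hN ⟨x, hx, rfl⟩) (hdiag ⟨y, rfl⟩))

theorem Subgroup.IsSubnormal.exists_map_inl_lowerCentralSeries_le {H : Subgroup (G × G)}
    (hH : H.IsSubnormal) (hdiag : diagonalSubgroup G ≤ H) :
    ∃ n, ((⊤ : Subgroup G).lowerCentralSeries n).map (MonoidHom.inl G G) ≤ H := by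
  induction hH with
  | top => exact ⟨0, le_top⟩
  | step H K hHK _ hnormal ih =>
    obtain ⟨n, hn⟩ := ih (hdiag.trans hHK)
    exact ⟨n + 1, map_inl_commutator_top_le hdiag
      (hn.trans ((normal_subgroupOf_iff_le_normalizer hHK).mp hnormal))⟩

theorem isNilpotent_of_isSubnormal_diagonalSubgroup (h : (diagonalSubgroup G).IsSubnormal) :
    Group.IsNilpotent G := by
  obtain ⟨n, hn⟩ := h.exists_map_inl_lowerCentralSeries_le le_rfl
  rw [map_le_iff_le_comap, comap_inl_diagonalSubgroup, le_bot_iff] at hn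
  exact Subgroup.nilpotent_iff_lowerCentralSeries.mpr ⟨n, hn⟩

end

theorem stmt16 {G : Type*} [Group G] [Finite G] :
    Group.IsNilpotent G ↔
      IsSubnormalSubgroup ((MonoidHom.id G).prod (MonoidHom.id G)).range := by
  rw [isSubnormalSubgroup_iff_isSubnormal]
  refine ⟨fun _ => ?_, isNilpotent_of_isSubnormal_diagonalSubgroup⟩
  exact isSubnormal_of_normalizerCondition Group.normalizerCondition_of_isNilpotent _
end

section
/- A finite group G is nilpotent if and only if the diagonal homomorphism Δ : G →* G × G, g ↦ (g,g), has the right lifting property with respect to every homomorphism f : N →* H whose image has normal closure equal to all of H. -/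
/-!
A square against the diagonal `Δ : G →* G × G` is a pair `j₁, j₂ : H →* G` that agree after
precomposition with `f`, and a filler exists exactly when `j₁ = j₂`. So the lifting condition
says: homomorphisms into `G` that agree on a normally generating subgroup are equal;
equivalently, a subgroup `K ≤ G × G` whose diagonal elements normally generate `K` lies in the
diagonal.

If `G` is finite nilpotent, so is `K`; its maximal subgroups are normal, hence a normally
generating subgroup of `K` is all of `K`. Conversely the condition passes to subgroups, and to
quotients: a diagonally generated `K ≤ (G ⧸ N)²` is the image of a diagonally generated subgroup
of `G²`, namely of a minimal subgroup of its preimage that still maps onto `K`. So by induction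
on `|G|` every proper subgroup and, if `Z(G) ≠ 1`, also `G ⧸ Z(G)` is nilpotent. If `Z(G) = 1`
and `G` is not nilpotent, take a non-normal maximal subgroup `M`: it normally generates `G` and
is nilpotent, so a nontrivial `y ∈ Z(M)` makes conjugation by `y` agree with the identity on
`M`, hence everywhere, and `y ∈ Z(G)`.
-/

universe u

open Subgroup

theorem lifts_prod_id_iff {A B G : Type*} [Group A] [Group B] [Group G] (f : A →* B) :
    Lifts f ((MonoidHom.id G).prod (MonoidHom.id G)) ↔
      ∀ j₁ j₂ : B →* G, j₁.comp f = j₂.comp f → j₁ = j₂ := by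
  constructor
  · intro hlift j₁ j₂ hj
    obtain ⟨h, -, hh⟩ := hlift (j₁.comp f) (j₁.prod j₂) <| by
      ext a
      · rfl
      · exact DFunLike.congr_fun hj a
    ext b
    exact (congrArg Prod.fst (DFunLike.congr_fun hh b)).symm.trans
      (congrArg Prod.snd (DFunLike.congr_fun hh b))
  · intro hdet i j hcomm
    have hi : ∀ a, j (f a) = (i a, i a) := fun a => (DFunLike.congr_fun hcomm a).symm
    have hj : (MonoidHom.fst G G).comp j = (MonoidHom.snd G G).comp j :=
      hdet _ _ <| MonoidHom.ext fun a => by simp [hi]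
    refine ⟨(MonoidHom.fst G G).comp j, MonoidHom.ext fun a => by simp [hi], ?_⟩
    ext b
    · rfl
    · exact DFunLike.congr_fun hj b

theorem IsCoatom.normalClosure_eq_top {G : Type*} [Group G] {M : Subgroup G} (hM : IsCoatom M)
    (hMn : ¬M.Normal) : normalClosure (M : Set G) = ⊤ :=
  (hM.le_iff.mp le_normalClosure).resolve_right fun h => hMn (h ▸ normalClosure_normal)

theorem Group.IsNilpotent.eq_top_of_normalClosure_eq_top {G : Type*} [Group G] [Finite G]
    [Group.IsNilpotent G] {S : Subgroup G} (hS : normalClosure (S : Set G) = ⊤) : S = ⊤ := by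
  by_contra hne
  obtain ⟨M, hM, hSM⟩ := (eq_top_or_exists_le_coatom S).resolve_left hne
  have : M.Normal :=
    NormalizerCondition.normal_of_coatom M normalizerCondition_of_isNilpotent hM
  exact hM.1 (top_unique (hS ▸ normalClosure_le_normal hSM))

theorem exists_map_eq_top_normalClosure_subgroupOf_eq_top {A B : Type*} [Group A] [Group B]
    [Finite A] {φ : A →* B} (hφ : Function.Surjective φ) {S : Subgroup A}
    (hS : normalClosure (S.map φ : Set B) = ⊤) :
    ∃ X : Subgroup A, X.map φ = ⊤ ∧ normalClosure (S.subgroupOf X : Set X) = ⊤ := by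
  -- For `X` minimal among the subgroups containing `S` and mapping onto `B`, the normal closure
  -- of `S` inside `X` is again such a subgroup.
  obtain ⟨X, ⟨hSX, hXφ⟩, hmin⟩ :=
    (Set.toFinite {X : Subgroup A | S ≤ X ∧ X.map φ = ⊤}).exists_minimal
      ⟨⊤, le_top, by rwa [← MonoidHom.range_eq_map, MonoidHom.range_eq_top]⟩
  have hψ : Function.Surjective (φ.comp X.subtype) := by
    rwa [← MonoidHom.range_eq_top, MonoidHom.range_eq_map, ← map_map, ← MonoidHom.range_eq_map,
      range_subtype]
  set Y := (normalClosure (S.subgroupOf X : Set X)).map X.subtype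
  have hSY : S ≤ Y := fun s hs => ⟨⟨s, hSX hs⟩, subset_normalClosure hs, rfl⟩
  have hYφ : Y.map φ = ⊤ := by
    rw [map_map, map_normalClosure _ _ hψ, ← coe_map, ← map_map, subgroupOf_map_subtype,
      inf_of_le_left hSX, hS]
  refine ⟨X, hXφ, map_injective X.subtype_injective ?_⟩
  rw [← MonoidHom.range_eq_map, range_subtype]
  exact le_antisymm (map_subtype_le _) (hmin ⟨hSY, hYφ⟩ (map_subtype_le _))

def diagonal (G : Type*) [Group G] : Subgroup (G × G) :=
  (MonoidHom.fst G G).eqLocus (MonoidHom.snd G G)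

def HomsDeterminedOnNormalGenerators (G : Type u) [Group G] : Prop :=
  ∀ (H : Type u) [Group H] (j₁ j₂ : H →* G),
    normalClosure (j₁.eqLocus j₂ : Set H) = ⊤ → j₁ = j₂

namespace HomsDeterminedOnNormalGenerators

section

variable {G : Type u} [Group G]

theorem iff_forall_lifts :
    HomsDeterminedOnNormalGenerators G ↔
      ∀ (N H : Type u) [Group N] [Group H] (f : N →* H),
        normalClosure (f.range : Set H) = ⊤ →
          Lifts f ((MonoidHom.id G).prod (MonoidHom.id G)) := by
  simp only [lifts_prod_id_iff]
  constructor
  · intro hG N H _ _ f hf j₁ j₂ hj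
    refine hG H j₁ j₂ (top_unique (hf ▸ normalClosure_mono ?_))
    rintro _ ⟨n, rfl⟩
    exact DFunLike.congr_fun hj n
  · intro hlift H _ j₁ j₂ hE
    exact hlift (j₁.eqLocus j₂) H (j₁.eqLocus j₂).subtype (by rwa [range_subtype]) j₁ j₂
      (MonoidHom.ext fun e => e.2)

theorem iff_diagonal :
    HomsDeterminedOnNormalGenerators G ↔
      ∀ K : Subgroup (G × G),
        normalClosure ((diagonal G).subgroupOf K : Set K) = ⊤ → K ≤ diagonal G := by
  constructor
  · intro hG K hK x hx
    exact DFunLike.congr_fun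
      (hG K ((MonoidHom.fst G G).comp K.subtype) ((MonoidHom.snd G G).comp K.subtype) hK) ⟨x, hx⟩
  · intro hG H _ j₁ j₂ hE
    set ρ := (j₁.prod j₂).rangeRestrict
    have hρ : Function.Surjective ρ := (j₁.prod j₂).rangeRestrict_surjective
    have hK : normalClosure
        ((diagonal G).subgroupOf (j₁.prod j₂).range : Set (j₁.prod j₂).range) = ⊤ := by
      refine top_unique ?_
      calc ⊤ = (normalClosure (j₁.eqLocus j₂ : Set H)).map ρ := by
            rw [hE, map_top_of_surjective _ hρ]
        _ = normalClosure (ρ '' j₁.eqLocus j₂) := map_normalClosure _ _ hρ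
        _ ≤ _ := normalClosure_mono (by rintro _ ⟨h, hh, rfl⟩; exact hh)
    ext h
    exact hG _ hK ⟨h, rfl⟩

theorem of_isNilpotent [Finite G] [Group.IsNilpotent G] : HomsDeterminedOnNormalGenerators G :=
  iff_diagonal.mpr fun _ hK =>
    subgroupOf_eq_top.mp (Group.IsNilpotent.eq_top_of_normalClosure_eq_top hK)

theorem subgroup (hG : HomsDeterminedOnNormalGenerators G) (A : Subgroup G) :
    HomsDeterminedOnNormalGenerators A := by
  intro H _ j₁ j₂ hE
  refine (MonoidHom.cancel_left A.subtype_injective).mp (hG H _ _ ?_)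
  convert hE using 3
  ext h
  exact Subtype.coe_inj

theorem quotient [Finite G] (hG : HomsDeterminedOnNormalGenerators G) (N : Subgroup G)
    [N.Normal] : HomsDeterminedOnNormalGenerators (G ⧸ N) := by
  rw [iff_diagonal]
  intro K hK
  set Φ := (QuotientGroup.mk' N).prodMap (QuotientGroup.mk' N)
  have hΦ : Function.Surjective Φ :=
    (QuotientGroup.mk'_surjective N).prodMap (QuotientGroup.mk'_surjective N)
  have hdiag : normalClosure (((diagonal G).subgroupOf (K.comap Φ)).map (Φ.subgroupComap K) :
      Set K) = ⊤ := by
    refine top_unique (hK ▸ normalClosure_mono ?_)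
    rintro ⟨⟨q, _⟩, hk⟩ (rfl : q = _)
    obtain ⟨g, rfl⟩ := QuotientGroup.mk'_surjective N q
    exact ⟨⟨(g, g), hk⟩, rfl, rfl⟩
  obtain ⟨X, hXφ, hX⟩ := exists_map_eq_top_normalClosure_subgroupOf_eq_top
    (Φ.subgroupComap_surjective_of_surjective K hΦ) hdiag
  have hXdiag := hG X ((MonoidHom.fst G G).comp ((K.comap Φ).subtype.comp X.subtype))
    ((MonoidHom.snd G G).comp ((K.comap Φ).subtype.comp X.subtype)) hX
  intro k hk
  obtain ⟨x, hxX, hx⟩ : (⟨k, hk⟩ : K) ∈ X.map (Φ.subgroupComap K) := hXφ ▸ mem_top _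
  rw [← show Φ x = k from congrArg Subtype.val hx]
  exact congrArg (QuotientGroup.mk' N) (DFunLike.congr_fun hXdiag ⟨x, hxX⟩)

theorem centralizer_le_center (hG : HomsDeterminedOnNormalGenerators G) {S : Subgroup G}
    (hS : normalClosure (S : Set G) = ⊤) : centralizer S ≤ center G := by
  intro y hy
  have hconj := hG G (MonoidHom.id G) (MulAut.conj y).toMonoidHom <| top_unique <|
    hS ▸ normalClosure_mono fun s hs => by
      show s = y * s * y⁻¹
      rw [← mem_centralizer_iff.mp hy s hs, mul_inv_cancel_right]
  refine mem_center_iff.mpr fun g => ?_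
  have : g = y * g * y⁻¹ := DFunLike.congr_fun hconj g
  calc g * y = y * g * y⁻¹ * y := by rw [← this]
    _ = y * g := by group

end

theorem isNilpotent {G : Type u} [instG : Group G] [Finite G]
    (hG : HomsDeterminedOnNormalGenerators G) : Group.IsNilpotent G := by
  induction G using Finite.induction_subsingleton_or_nontrivial generalizing instG with
  | hbase => infer_instance
  | hstep G ih =>
    by_cases hZ : center G = ⊥
    · by_contra hnil
      obtain ⟨M, hM, hMn⟩ : ∃ M : Subgroup G, IsCoatom M ∧ ¬M.Normal := by
        by_contra! h
        exact hnil ((Group.isNilpotent_of_finite_tfae.out 2 0).mp h)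
      have : Group.IsNilpotent M := ih M
        ((card_le_card_group M).lt_of_ne (mt (card_eq_iff_eq_top M).mp hM.1)) (hG.subgroup M)
      have : Nontrivial M := (nontrivial_iff_ne_bot M).mpr fun h => hMn (h ▸ normal_bot)
      obtain ⟨y, hy⟩ := ne_bot_iff_exists_ne_one.mp (Group.IsNilpotent.center_ne_bot M)
      have hyG : ((y : M) : G) ∈ center G :=
        hG.centralizer_le_center (hM.normalClosure_eq_top hMn) <| mem_centralizer_iff.mpr
          fun m hm => congrArg Subtype.val (mem_center_iff.mp y.2 ⟨m, hm⟩)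
      rw [hZ, mem_bot] at hyG
      exact hy (Subtype.ext (Subtype.ext hyG))
    · have hcard : Nat.card (G ⧸ center G) < Nat.card G := by
        rw [card_eq_card_quotient_mul_card_subgroup (center G)]
        exact lt_mul_of_one_lt_right Nat.card_pos ((one_lt_card_iff_ne_bot _).mpr hZ)
      exact Group.of_quotient_center_nilpotent (ih _ hcard (hG.quotient _))

end HomsDeterminedOnNormalGenerators

theorem Group.isNilpotent_iff_homsDeterminedOnNormalGenerators {G : Type u} [Group G]
    [Finite G] : Group.IsNilpotent G ↔ HomsDeterminedOnNormalGenerators G :=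
  ⟨fun _ => .of_isNilpotent, HomsDeterminedOnNormalGenerators.isNilpotent⟩

theorem stmt17 {G : Type u} [Group G] [Finite G] :
    Group.IsNilpotent G ↔
      ∀ (N H : Type u) [Group N] [Group H] (f : N →* H),
        Subgroup.normalClosure (f.range : Set H) = ⊤ →
          Lifts f ((MonoidHom.id G).prod (MonoidHom.id G)) :=
  Group.isNilpotent_iff_homsDeterminedOnNormalGenerators.trans
    HomsDeterminedOnNormalGenerators.iff_forall_lifts
end

section
/- If a homomorphism g : D →* G has the right lifting property with respect to every homomorphism f : N →* H whose image has normal closure all of H, then g is injective. -/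
theorem Lifts.eq_one_of_comp_eq_one {A B X Y : Type*} [Group A] [Group B] [Group X] [Group Y]
    [Subsingleton B] {f : A →* B} {g : X →* Y} (hfg : Lifts f g) {i : A →* X}
    (hi : g.comp i = 1) : i = 1 := by
  obtain ⟨h, hfi, -⟩ := hfg i 1 hi
  rw [← hfi, Subsingleton.elim h 1, MonoidHom.one_comp]

theorem Lifts.ker_eq_bot {B X Y : Type*} [Group B] [Group X] [Group Y] [Subsingleton B]
    {g : X →* Y} {f : g.ker →* B} (hfg : Lifts f g) : g.ker = ⊥ := by
  have hsub : g.ker.subtype = 1 := hfg.eq_one_of_comp_eq_one (by ext x; exact x.2)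
  rw [← Subgroup.range_subtype g.ker, hsub, MonoidHom.range_one]

theorem stmt18 {D G : Type u} [Group D] [Group G] (g : D →* G)
    (h : ∀ (N H : Type u) [Group N] [Group H] (f : N →* H),
      Subgroup.normalClosure (f.range : Set H) = ⊤ → Lifts f g) :
    Function.Injective g := by
  have hlift : Lifts (1 : g.ker →* PUnit.{u + 1}) g := h _ _ 1 (Subsingleton.elim _ _)
  exact (MonoidHom.ker_eq_bot_iff g).1 hlift.ker_eq_bot
end
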